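/- arXiv:1011.1587 — 2 statements merged into one kernel-verified Lean document; each statement's English description precedes it below -/
import Mathlib

section
/- For all x, y ∈ M the identity γ(x, y) = γ(T y, x + y − T y) holds in Adj(A(M,T)); in particular γ(T y, y − T y) = 1 for all y ∈ M. -/
/-!
Common setup: the adjoint group of the Alexander quandle `A(M,T)` (F.J.-B.J. Clauwens,
"The adjoint group of an Alexander quandle").

For an abelian group `M` with automorphism `T`, the Alexander quandle `A(M,T)` is `M` with
`y * x = T y + x - T x`, and the adjoint group `Adj(A(M,T))` is presented with generators
`e x` for `x : M` and relations `e (y * x) = (e x)⁻¹ * e y * e x`.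
-/

open scoped TensorProduct

namespace Clauwens

variable {M : Type*} [AddCommGroup M]

/-- The relations of the adjoint group of the Alexander quandle `A(M,T)`:
for each `x y : M`, the relation `e_{y*x} = e_x⁻¹ * e_y * e_x`, where `y*x = T y + x - T x`. -/
def rels (T : M ≃+ M) : Set (FreeGroup M) :=
  {r | ∃ x y : M, r = FreeGroup.of (T y + x - T x) *
      ((FreeGroup.of x)⁻¹ * FreeGroup.of y * FreeGroup.of x)⁻¹}

/-- The adjoint group `Adj(A(M,T))` of the Alexander quandle. -/
abbrev Adj (T : M ≃+ M) : Type _ := PresentedGroup (rels T)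

/-- The generator `e_x` of the adjoint group. -/
def e (T : M ≃+ M) (x : M) : Adj T := PresentedGroup.of x

/-- The quandle automorphism `p ↦ p * x = T p + x - T x` of `A(M,T)`. -/
def σ (T : M ≃+ M) (x : M) : Equiv.Perm M where
  toFun p := T p + (x - T x)
  invFun p := T.symm (p - (x - T x))
  left_inv p := by simp
  right_inv p := by simp

lemma σ_apply (T : M ≃+ M) (x p : M) : σ T x p = T p + (x - T x) := rfl

lemma σ_inv_apply (T : M ≃+ M) (x p : M) : (σ T x)⁻¹ p = T.symm (p - (x - T x)) := rfl

lemma σ_rel (T : M ≃+ M) (x y : M) :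
    σ T x * σ T y * (σ T x)⁻¹ = σ T (T y + x - T x) := by
  ext p
  simp only [Equiv.Perm.mul_apply, σ_apply, σ_inv_apply, map_add, map_sub,
    AddEquiv.apply_symm_apply]
  abel

/-- The homomorphism `ρ` from the adjoint group to the group of quandle automorphisms of
`A(M,T)` acting on the right of `M` (hence the `ᵐᵒᵖ`), induced by the right action
`p · e_x = p * x = T p + x - T x`; the automorphism by which `g` acts is `(ρ T g).unop`. -/
def ρ (T : M ≃+ M) : Adj T →* (Equiv.Perm M)ᵐᵒᵖ :=
  PresentedGroup.toGroup (f := fun x => MulOpposite.op (σ T x)) (by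
    rintro r ⟨x, y, rfl⟩
    simp only [map_mul, map_inv, FreeGroup.lift_apply_of, ← MulOpposite.op_inv, ← MulOpposite.op_mul,
      mul_inv_rev, inv_inv]
    rw [MulOpposite.op_eq_one_iff, ← σ_rel T x y]
    group)

/-- `γ(x,y) = e_0⁻¹ e_{x+y} e_y⁻¹ e_0 e_x⁻¹ e_0`, so that
`e_0⁻¹ e_{x+y} = γ(x,y) e_0⁻¹ e_x e_0⁻¹ e_y`. -/
def γ (T : M ≃+ M) (x y : M) : Adj T :=
  (e T 0)⁻¹ * e T (x + y) * (e T y)⁻¹ * e T 0 * (e T x)⁻¹ * e T 0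

/-- `λ(x,y) = γ(y,x)⁻¹ γ(x,y)`. -/
def lam (T : M ≃+ M) (x y : M) : Adj T := (γ T y x)⁻¹ * γ T x y

/-- The additive endomorphism `τ` of `M ⊗_ℤ M` with `τ(x ⊗ y) = T y ⊗ x`. -/
noncomputable def τmap (T : M ≃+ M) : M ⊗[ℤ] M →ₗ[ℤ] M ⊗[ℤ] M :=
  (TensorProduct.comm ℤ M M).toLinearMap ∘ₗ
    (LinearMap.lTensor M T.toAddMonoidHom.toIntLinearMap)

lemma τmap_tmul (T : M ≃+ M) (x y : M) : τmap T (x ⊗ₜ[ℤ] y) = T y ⊗ₜ[ℤ] x := rfl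

/-- `S(M,T) = coker(1 - τ) = (M ⊗_ℤ M)/im(1 - τ)`. -/
abbrev S (T : M ≃+ M) : Type _ :=
  (M ⊗[ℤ] M) ⧸ LinearMap.range (LinearMap.id - τmap T)

/-- The class `[x ⊗ y]` in `S(M,T)`. -/
noncomputable def cls (T : M ≃+ M) (x y : M) : S T := Submodule.Quotient.mk (x ⊗ₜ[ℤ] y)

lemma mk_τmap (T : M ≃+ M) (w : M ⊗[ℤ] M) :
    (Submodule.Quotient.mk (τmap T w) : S T) = Submodule.Quotient.mk w := by
  rw [Submodule.Quotient.eq]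
  exact ⟨-w, by simp [LinearMap.sub_apply]; abel⟩

lemma cls_T (T : M ≃+ M) (x y : M) : cls T (T x) (T y) = cls T x y := by
  have h1 : cls T (T x) (T y) = Submodule.Quotient.mk (τmap T (T y ⊗ₜ[ℤ] x)) := rfl
  have h2 : (Submodule.Quotient.mk (T y ⊗ₜ[ℤ] x) : S T)
      = Submodule.Quotient.mk (τmap T (x ⊗ₜ[ℤ] y)) := rfl
  rw [h1, mk_τmap, h2, mk_τmap]; rfl

lemma cls_add_left (T : M ≃+ M) (x x' y : M) :
    cls T (x + x') y = cls T x y + cls T x' y := by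
  simp only [cls, ← Submodule.Quotient.mk_add, TensorProduct.add_tmul]

lemma cls_add_right (T : M ≃+ M) (x y y' : M) :
    cls T x (y + y') = cls T x y + cls T x y' := by
  simp only [cls, ← Submodule.Quotient.mk_add, TensorProduct.tmul_add]

lemma cls_neg_left (T : M ≃+ M) (x y : M) : cls T (-x) y = -cls T x y := by
  simp only [cls, ← Submodule.Quotient.mk_neg, TensorProduct.neg_tmul]

lemma cls_zero_left (T : M ≃+ M) (y : M) : cls T 0 y = 0 := by
  simp [cls, TensorProduct.zero_tmul]

lemma cls_zero_right (T : M ≃+ M) (x : M) : cls T x 0 = 0 := by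
  simp [cls, TensorProduct.tmul_zero]

/-- `T^m` for `m : ℤ`. -/
def Tz (T : M ≃+ M) (m : ℤ) : M ≃+ M := (m • (T : AddAut M) : AddAut M)

lemma Tz_zero (T : M ≃+ M) (x : M) : Tz T 0 x = x := rfl

lemma Tz_one (T : M ≃+ M) (x : M) : Tz T 1 x = T x := by simp [Tz]

lemma Tz_add (T : M ≃+ M) (m n : ℤ) (x : M) : Tz T (m + n) x = Tz T m (Tz T n x) := by
  simp [Tz, add_zsmul, AddAut.add_apply]

lemma cls_Tz_shift (T : M ≃+ M) (m : ℤ) (x y : M) :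
    cls T (Tz T (m + 1) x) (Tz T (m + 1) y) = cls T (Tz T m x) (Tz T m y) := by
  have h : ∀ z : M, Tz T (m + 1) z = T (Tz T m z) := by
    intro z; rw [add_comm, Tz_add, Tz_one]
  rw [h, h, cls_T]

lemma cls_Tz (T : M ≃+ M) (m : ℤ) (x y : M) :
    cls T (Tz T m x) (Tz T m y) = cls T x y := by
  induction m using Int.induction_on with
  | zero => rfl
  | succ i ih => rw [cls_Tz_shift, ih]
  | pred i ih =>
      have h := cls_Tz_shift T (-(i : ℤ) - 1) x y
      rw [sub_add_cancel] at h
      rw [← h, ih]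

/-- `F(M,T)` is the set `ℤ × M × S(M,T)` equipped with the multiplication
`(k, x, α)(m, y, β) = (k + m, T^m x + y, α + β + [T^m x ⊗ y])`. -/
abbrev F (T : M ≃+ M) : Type _ := ℤ × M × S T

noncomputable instance (T : M ≃+ M) : Group (F T) where
  mul g h := (g.1 + h.1, Tz T h.1 g.2.1 + h.2.1, g.2.2 + h.2.2 + cls T (Tz T h.1 g.2.1) h.2.1)
  one := ((0 : ℤ), (0 : M), (0 : S T))
  inv g := (-g.1, -(Tz T (-g.1) g.2.1), -g.2.2 + cls T g.2.1 g.2.1)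
  mul_assoc g h k := by
    obtain ⟨a, x, α⟩ := g; obtain ⟨b, y, β⟩ := h; obtain ⟨c, z, δ⟩ := k
    refine Prod.ext (add_assoc a b c) (Prod.ext ?_ ?_)
    · show Tz T c (Tz T b x + y) + z = Tz T (b + c) x + (Tz T c y + z)
      rw [add_comm b c, Tz_add, map_add]
      abel
    · show α + β + cls T (Tz T b x) y + δ + cls T (Tz T c (Tz T b x + y)) z
        = α + (β + δ + cls T (Tz T c y) z) + cls T (Tz T (b + c) x) (Tz T c y + z)
      rw [add_comm b c, Tz_add, map_add, cls_add_left, cls_add_right]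
      have h1 : cls T (Tz T c (Tz T b x)) (Tz T c y) = cls T (Tz T b x) y := cls_Tz T c _ _
      rw [h1]
      abel
  one_mul g := by
    obtain ⟨a, x, α⟩ := g
    refine Prod.ext (zero_add a) (Prod.ext ?_ ?_)
    · show Tz T a 0 + x = x
      rw [map_zero, zero_add]
    · show 0 + α + cls T (Tz T a 0) x = α
      rw [map_zero, cls_zero_left, zero_add, add_zero]
  mul_one g := by
    obtain ⟨a, x, α⟩ := g
    refine Prod.ext (add_zero a) (Prod.ext ?_ ?_)
    · show Tz T 0 x + 0 = x
      rw [Tz_zero, add_zero]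
    · show α + 0 + cls T (Tz T 0 x) 0 = α
      rw [cls_zero_right, add_zero, add_zero]
  inv_mul_cancel g := by
    obtain ⟨a, x, α⟩ := g
    have hx : Tz T a (Tz T (-a) x) = x := by
      rw [← Tz_add, add_neg_cancel, Tz_zero]
    refine Prod.ext (neg_add_cancel a) (Prod.ext ?_ ?_)
    · show Tz T a (-(Tz T (-a) x)) + x = 0
      rw [map_neg, hx, neg_add_cancel]
    · show -α + cls T x x + α + cls T (Tz T a (-(Tz T (-a) x))) x = 0
      rw [map_neg, hx, cls_neg_left]
      abel

/-- The canonical augmentation `ε : Adj(A(M,T)) → ℤ`, with `ε(e_x) = 1` for all `x`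
(written multiplicatively since `Adj` is a multiplicative group). -/
def ε (T : M ≃+ M) : Adj T →* Multiplicative ℤ :=
  PresentedGroup.toGroup (f := fun _ => Multiplicative.ofAdd (1 : ℤ)) (by
    rintro r ⟨x, y, rfl⟩
    simp only [map_mul, map_inv, FreeGroup.lift_apply_of]
    group)

/-- The subgroup `F(M,T)⁰` of elements `(0, x, α)` of `F(M,T)`. -/
noncomputable def Fo (T : M ≃+ M) : Subgroup (F T) where
  carrier := {g | g.1 = 0}
  mul_mem' := by
    rintro ⟨a, x, α⟩ ⟨b, y, β⟩ (ha : a = 0) (hb : b = 0)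
    show a + b = 0
    rw [ha, hb, add_zero]
  one_mem' := rfl
  inv_mem' := by
    rintro ⟨a, x, α⟩ (ha : a = 0)
    show -a = 0
    rw [ha, neg_zero]

/-- The fundamental group `π₁(A(M,T), 0)` of the Alexander quandle based at `0 ∈ M`:
the elements of `ker ε` fixing the base point `0`. -/
def pi1 (T : M ≃+ M) : Subgroup (Adj T) where
  carrier := {g | g ∈ (ε T).ker ∧ (ρ T g).unop 0 = 0}
  one_mem' := ⟨(ε T).ker.one_mem, by simp⟩
  mul_mem' := by
    intro a b ha hb
    refine ⟨(ε T).ker.mul_mem ha.1 hb.1, ?_⟩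
    show ((ρ T) (a * b)).unop 0 = 0
    rw [map_mul, MulOpposite.unop_mul, Equiv.Perm.mul_apply, ha.2, hb.2]
  inv_mem' := by
    intro a ha
    refine ⟨(ε T).ker.inv_mem ha.1, ?_⟩
    show ((ρ T) a⁻¹).unop 0 = 0
    rw [map_inv, MulOpposite.unop_inv]
    exact Equiv.Perm.inv_eq_iff_eq.mpr ha.2.symm

lemma e_conj (T : M ≃+ M) (x y : M) :
    e T (T y + x - T x) = (e T x)⁻¹ * e T y * e T x := by
  simpa [e, PresentedGroup.of] using
    PresentedGroup.mk_eq_mk_of_mul_inv_mem (rels := rels T) ⟨x, y, rfl⟩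

lemma e_apply_T (T : M ≃+ M) (y : M) : e T (T y) = (e T 0)⁻¹ * e T y * e T 0 := by
  simpa using e_conj T 0 y

/-- `x + y - T y = (T⁻¹ x) * y` in the quandle, and `e_{T⁻¹ x}` is `e_x` conjugated by `e_0⁻¹`. -/
lemma e_add_sub_T (T : M ≃+ M) (x y : M) :
    e T (x + y - T y) = (e T y)⁻¹ * (e T 0 * e T x * (e T 0)⁻¹) * e T y := by
  have h : e T (T.symm x) = e T 0 * e T x * (e T 0)⁻¹ := by
    have hx := e_apply_T T (T.symm x)
    rw [T.apply_symm_apply] at hx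
    rw [hx]
    group
  simpa [h] using e_conj T y (T.symm x)

lemma γ_zero_left (T : M ≃+ M) (y : M) : γ T 0 y = 1 := by
  simp [γ]

lemma γ_eq_γ_T (T : M ≃+ M) (x y : M) : γ T x y = γ T (T y) (x + y - T y) := by
  have hsum : T y + (x + y - T y) = x + y := by abel
  rw [γ, γ, hsum, e_add_sub_T, e_apply_T]
  group

/-- `γ(x, y) = γ(T y, x + y - T y)` for all `x y ∈ M`; in particular
`γ(T y, y - T y) = 1` for all `y ∈ M`. -/
theorem statement5 (T : M ≃+ M) :
    (∀ x y : M, γ T x y = γ T (T y) (x + y - T y)) ∧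
    (∀ y : M, γ T (T y) (y - T y) = 1) :=
  ⟨γ_eq_γ_T T, fun y => by simpa [γ_zero_left] using (γ_eq_γ_T T 0 y).symm⟩

end Clauwens
end

section
/- Assume that 1 − T : M → M is invertible. Then γ(x, y) = γ(T y, x) in Adj(A(M,T)) for all x, y ∈ M. -/
/-!
Common setup: the adjoint group of the Alexander quandle `A(M,T)` (F.J.-B.J. Clauwens,
"The adjoint group of an Alexander quandle").

For an abelian group `M` with automorphism `T`, the Alexander quandle `A(M,T)` is `M` with
`y * x = T y + x - T x`, and the adjoint group `Adj(A(M,T))` is presented with generators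
`e x` for `x : M` and relations `e (y * x) = (e x)⁻¹ * e y * e x`.
-/

open scoped TensorProduct

namespace Clauwens

variable {M : Type*} [AddCommGroup M]

/-! Conjugation by `e_a e_b⁻¹` moves every generator `e_p` to `e_{p + T⁻¹u - u}` with `u = b - a`,
a shift that is additive in `u`. Hence `(e_a e_b⁻¹)(e_c e_d⁻¹)` fixes every generator, and so is
central, as soon as `a + c = b + d`. Applied to `a = -T y`, `b = 0`, `c = T y + x`, `d = x`,
this gives `e_{x+y} e_{x+y-Ty}⁻¹ = e_{Ty+x} e_x⁻¹`, and unwinding `e_{x+y-Ty}` as a conjugate of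
`e_x` turns this identity into `γ(x,y) = γ(Ty,x)`. -/

theorem _root_.PresentedGroup.mem_center_of_forall_commute_of {α : Type*}
    {rels : Set (FreeGroup α)} {g : PresentedGroup rels} (hg : ∀ a : α, Commute g (PresentedGroup.of a)) :
    g ∈ Subgroup.center (PresentedGroup rels) := by
  refine Subgroup.mem_center_iff.mpr fun h => ?_
  have hh : h ∈ Subgroup.centralizer {g} :=
    PresentedGroup.generated_by rels _ (fun a => Subgroup.mem_centralizer_singleton_iff.mpr
      (hg a).eq.symm) h
  exact Subgroup.mem_centralizer_singleton_iff.mp hh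

variable (T : M ≃+ M)

lemma e_inv_mul_e_mul_e (x p : M) : (e T x)⁻¹ * e T p * e T x = e T (T p + x - T x) := by
  rw [eq_comm, ← mul_inv_eq_one]
  exact (QuotientGroup.eq_one_iff _).mpr (Subgroup.subset_normalClosure ⟨x, p, rfl⟩)

lemma e_mul_e_mul_e_inv (x p : M) : e T x * e T p * (e T x)⁻¹ = e T (T.symm (p - x) + x) := by
  have h := e_inv_mul_e_mul_e T x (T.symm (p - x) + x)
  rw [map_add, T.apply_symm_apply, show p - x + T x + x - T x = p by abel] at h
  rw [← h]
  group

lemma conj_e_mul_e_inv (a b p : M) :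
    (e T a * (e T b)⁻¹) * e T p * (e T a * (e T b)⁻¹)⁻¹
      = e T (p + T.symm (b - a) - (b - a)) := by
  calc (e T a * (e T b)⁻¹) * e T p * (e T a * (e T b)⁻¹)⁻¹
      = e T a * ((e T b)⁻¹ * e T p * e T b) * (e T a)⁻¹ := by group
    _ = e T (T.symm (T p + b - T b - a) + a) := by
      rw [e_inv_mul_e_mul_e, e_mul_e_mul_e_inv]
    _ = e T (p + T.symm (b - a) - (b - a)) := by
      congr 1
      rw [show T p + b - T b - a = T p - T b + (b - a) by abel, map_add, ← map_sub,
        T.symm_apply_apply]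
      abel

lemma e_mul_e_inv_mul_e_mul_e_inv_mem_center {a b c d : M} (h : a + c = b + d) :
    e T a * (e T b)⁻¹ * (e T c * (e T d)⁻¹) ∈ Subgroup.center (Adj T) := by
  refine PresentedGroup.mem_center_of_forall_commute_of fun p => ?_
  have hdc : d - c = -(b - a) := by rw [neg_sub, sub_eq_sub_iff_add_eq_add, h, add_comm]
  rw [Commute, SemiconjBy, ← mul_inv_eq_iff_eq_mul]
  show _ = e T p
  calc e T a * (e T b)⁻¹ * (e T c * (e T d)⁻¹) * e T p
        * (e T a * (e T b)⁻¹ * (e T c * (e T d)⁻¹))⁻¹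
      = (e T a * (e T b)⁻¹) * ((e T c * (e T d)⁻¹) * e T p * (e T c * (e T d)⁻¹)⁻¹)
        * (e T a * (e T b)⁻¹)⁻¹ := by group
    _ = e T p := by
      rw [conj_e_mul_e_inv, conj_e_mul_e_inv, hdc, map_neg]
      abel_nf

lemma commute_e_mul_e_inv {a b c d : M} (h : a + c = b + d) :
    Commute (e T a * (e T b)⁻¹) (e T c * (e T d)⁻¹) := by
  have hz := Subgroup.mem_center_iff.mp (e_mul_e_inv_mul_e_mul_e_inv_mem_center T h)
    (e T a * (e T b)⁻¹)
  exact mul_left_cancel (hz.trans (mul_assoc _ _ _))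

lemma e_add_mul_e_inv (x y : M) :
    e T (x + y) * (e T (x + y - T y))⁻¹ = e T (T y + x) * (e T x)⁻¹ := by
  set X := e T (-T y) * (e T 0)⁻¹
  have hX : ∀ p, X * e T p * X⁻¹ = e T (p + y - T y) := fun p => by
    rw [conj_e_mul_e_inv, zero_sub, neg_neg, T.symm_apply_apply]
  have hcomm : Commute X (e T (T y + x) * (e T x)⁻¹) :=
    commute_e_mul_e_inv T (by rw [zero_add, neg_add_cancel_left])
  calc e T (x + y) * (e T (x + y - T y))⁻¹
      = (X * e T (T y + x) * X⁻¹) * (X * e T x * X⁻¹)⁻¹ := by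
        rw [hX, hX, show T y + x + y - T y = x + y by abel]
    _ = X * (e T (T y + x) * (e T x)⁻¹) * X⁻¹ := by group
    _ = e T (T y + x) * (e T x)⁻¹ := by rw [hcomm.eq]; group

theorem statement9_general (T : M ≃+ M) (x y : M) : γ T x y = γ T (T y) x := by
  have hTy : e T (T y) = (e T 0)⁻¹ * e T y * e T 0 := by
    simpa using (e_inv_mul_e_mul_e T 0 y).symm
  have hxy : e T (x + y - T y) = (e T y)⁻¹ * (e T 0 * e T x * (e T 0)⁻¹) * e T y := by
    rw [e_mul_e_mul_e_inv, e_inv_mul_e_mul_e]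
    simp
  have key : e T (x + y) = e T (T y + x) * (e T x)⁻¹ * e T (x + y - T y) := by
    rw [← e_add_mul_e_inv]; group
  rw [γ, γ, key, hxy, hTy]
  group

/-- If `1 - T` is invertible then `γ(x, y) = γ(T y, x)` for all `x y ∈ M`. -/
theorem statement9 (T : M ≃+ M) (hT : Function.Bijective fun x : M => x - T x)
    (x y : M) : γ T x y = γ T (T y) x :=
  statement9_general T x y

end Clauwens
end
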